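/- Let G be a finite group, B a free ℤ_p-module of finite rank with G-action, and A a ℤ_pG-submodule of B contained both in f·B and in e·B, where e = exp H^m(G,B) and f = exp H^{m+1}(G,A). Then there is a short exact sequence 0 → H^m(G,B) → H^m(G,B/A) → H^{m+1}(G,A) → 0; in particular the map H^m(G,B) → H^m(G,B/A) is injective and the connecting homomorphism H^m(G,B/A) → H^{m+1}(G,A) is surjective. -/

import Mathlib

namespace GroupCoh

variable (G : Type) [Group G] (M : Type) [AddCommGroup M] [DistribMulAction G M]

/-- Coboundary map on inhomogeneous cochains. -/
def d (m : ℕ) : ((Fin m → G) → M) →+ ((Fin (m + 1) → G) → M) where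
  toFun c := fun g => g 0 • c (fun i => g i.succ) +
    ∑ j : Fin (m + 1), ((-1 : ℤ) ^ ((j : ℕ) + 1)) • c (Fin.contractNth j (· * ·) g)
  map_zero' := by funext g; simp
  map_add' c₁ c₂ := by
    funext g
    simp only [Pi.add_apply, smul_add, Finset.sum_add_distrib]
    abel

/-- Cocycles. -/
def Zc (m : ℕ) : AddSubgroup ((Fin m → G) → M) := (d G M m).ker

/-- Coboundaries. -/
def Bc : (m : ℕ) → AddSubgroup ((Fin m → G) → M)
  | 0 => ⊥
  | (m + 1) => (d G M m).range

/-- Cohomology. -/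
def H (m : ℕ) : Type := Zc G M m ⧸ ((Bc G M m).addSubgroupOf (Zc G M m))

noncomputable instance (m : ℕ) : AddCommGroup (H G M m) :=
  QuotientAddGroup.Quotient.addCommGroup _

/-- Class of a cocycle. -/
def mkH (m : ℕ) (c : (Fin m → G) → M) (hc : c ∈ Zc G M m) : H G M m :=
  QuotientAddGroup.mk ⟨c, hc⟩

end GroupCoh

/-!
In the long exact cohomology sequence of `0 → A → B → Q → 0`, the map `H^m(B) → H^m(Q)` is
injective once `H^m(ι) = 0`, and the connecting map is onto `H^{m+1}(A)` once `H^{m+1}(ι) = 0`.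
Since `B` is torsion-free and `ι(A) ⊆ k·B`, dividing by `k` gives an equivariant `ψ` with
`ι = k·ψ`, so `H(ι) = k·H(ψ)`. For `k = e` this vanishes because `e` kills the target `H^m(B)`,
for `k = f` because `f` kills the source `H^{m+1}(A)`.
-/

namespace GroupCoh

section Cochains

variable {G : Type} [Group G] {M N : Type} [AddCommGroup M] [DistribMulAction G M]
  [AddCommGroup N] [DistribMulAction G N]

theorem d_apply (m : ℕ) (c : (Fin m → G) → M) (g : Fin (m + 1) → G) :
    d G M m c g = g 0 • c (fun i => g i.succ) +
      ∑ j : Fin (m + 1), ((-1 : ℤ) ^ ((j : ℕ) + 1)) • c (Fin.contractNth j (· * ·) g) := rfl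

/-- `d` is, by definition, the differential of Mathlib's complex of inhomogeneous cochains. -/
theorem d_d (m : ℕ) (c : (Fin m → G) → M) : d G M (m + 1) (d G M m c) = 0 :=
  congrArg (fun f => f.hom c)
    (groupCohomology.inhomogeneousCochains.d_comp_d m (Rep.ofDistribMulAction ℤ G M))

theorem mem_Zc_iff {m : ℕ} {c : (Fin m → G) → M} : c ∈ Zc G M m ↔ d G M m c = 0 :=
  AddMonoidHom.mem_ker

theorem Bc_le_Zc (m : ℕ) : Bc G M m ≤ Zc G M m := by
  intro c hc
  cases m with
  | zero => rw [(AddSubgroup.mem_bot).1 hc]; exact zero_mem _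
  | succ m =>
    obtain ⟨c', rfl⟩ := hc
    exact mem_Zc_iff.2 (d_d m c')

theorem mkH_eq_zero_iff {m : ℕ} {c : (Fin m → G) → M} (hc : c ∈ Zc G M m) :
    mkH G M m c hc = 0 ↔ c ∈ Bc G M m :=
  (QuotientAddGroup.eq_zero_iff _).trans AddSubgroup.mem_addSubgroupOf

theorem mkH_eq_mkH_iff {m : ℕ} {c c' : (Fin m → G) → M} (hc : c ∈ Zc G M m)
    (hc' : c' ∈ Zc G M m) : mkH G M m c hc = mkH G M m c' hc' ↔ c - c' ∈ Bc G M m := by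
  rw [← sub_eq_zero, ← mkH_eq_zero_iff (sub_mem hc hc')]
  rfl

theorem mkH_add {m : ℕ} {c c' : (Fin m → G) → M} (hc : c ∈ Zc G M m) (hc' : c' ∈ Zc G M m) :
    mkH G M m (c + c') (add_mem hc hc') = mkH G M m c hc + mkH G M m c' hc' := rfl

theorem mkH_nsmul {m : ℕ} {c : (Fin m → G) → M} (hc : c ∈ Zc G M m) (k : ℕ) :
    mkH G M m (k • c) (nsmul_mem hc k) = k • mkH G M m c hc :=
  map_nsmul (QuotientAddGroup.mk' _) k (⟨c, hc⟩ : Zc G M m)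

theorem exists_mkH_eq {m : ℕ} (x : H G M m) : ∃ c hc, mkH G M m c hc = x := by
  obtain ⟨⟨c, hc⟩, rfl⟩ := QuotientAddGroup.mk_surjective x
  exact ⟨c, hc, rfl⟩

def cochainMap (φ : M →+[G] N) (m : ℕ) : ((Fin m → G) → M) →+ ((Fin m → G) → N) :=
  (φ : M →+ N).compLeft _

@[simp]
theorem cochainMap_apply (φ : M →+[G] N) {m : ℕ} (c : (Fin m → G) → M) (g : Fin m → G) :
    cochainMap φ m c g = φ (c g) := rfl

theorem d_cochainMap (φ : M →+[G] N) {m : ℕ} (c : (Fin m → G) → M) :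
    d G N m (cochainMap φ m c) = cochainMap φ (m + 1) (d G M m c) := by
  funext g
  simp only [d_apply, cochainMap_apply, map_add, map_smul, map_sum, map_zsmul]

theorem cochainMap_mem_Zc (φ : M →+[G] N) {m : ℕ} {c : (Fin m → G) → M}
    (hc : c ∈ Zc G M m) : cochainMap φ m c ∈ Zc G N m := by
  rw [mem_Zc_iff, d_cochainMap, mem_Zc_iff.1 hc, map_zero]

theorem cochainMap_mem_Bc (φ : M →+[G] N) {m : ℕ} {c : (Fin m → G) → M}
    (hc : c ∈ Bc G M m) : cochainMap φ m c ∈ Bc G N m := by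
  cases m with
  | zero => rw [(AddSubgroup.mem_bot).1 hc, map_zero]; exact zero_mem _
  | succ m =>
    obtain ⟨c', rfl⟩ := hc
    exact ⟨cochainMap φ m c', d_cochainMap φ c'⟩

theorem cochainMap_injective {φ : M →+[G] N} (hφ : Function.Injective φ) (m : ℕ) :
    Function.Injective (cochainMap φ m) :=
  fun _ _ h => funext fun g => hφ (congrFun h g)

theorem cochainMap_surjective {φ : M →+[G] N} (hφ : Function.Surjective φ) (m : ℕ) :
    Function.Surjective (cochainMap φ m) := by
  intro q
  choose c hc using fun g => hφ (q g)
  exact ⟨c, funext hc⟩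

theorem exists_mem_Bc_cochainMap_eq {φ : M →+[G] N} (hφ : Function.Surjective φ) {m : ℕ}
    {q : (Fin m → G) → N} (hq : q ∈ Bc G N m) :
    ∃ c ∈ Bc G M m, cochainMap φ m c = q := by
  cases m with
  | zero => exact ⟨0, zero_mem _, by rw [(AddSubgroup.mem_bot).1 hq, map_zero]⟩
  | succ m =>
    obtain ⟨q', rfl⟩ := hq
    obtain ⟨c', rfl⟩ := cochainMap_surjective hφ m q'
    exact ⟨d G M m c', ⟨c', rfl⟩, (d_cochainMap φ c').symm⟩

def Hmap (φ : M →+[G] N) (m : ℕ) : H G M m →+ H G N m :=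
  QuotientAddGroup.map _ _
    (((cochainMap φ m).comp (Zc G M m).subtype).codRestrict _ fun z => cochainMap_mem_Zc φ z.2)
    fun _ hz => AddSubgroup.mem_addSubgroupOf.2 <|
      cochainMap_mem_Bc φ (AddSubgroup.mem_addSubgroupOf.1 hz)

theorem Hmap_mkH (φ : M →+[G] N) {m : ℕ} {c : (Fin m → G) → M} (hc : c ∈ Zc G M m) :
    Hmap φ m (mkH G M m c hc) = mkH G N m (cochainMap φ m c) (cochainMap_mem_Zc φ hc) := rfl

theorem Hmap_eq_nsmul {φ ψ : M →+[G] N} {k : ℕ} (h : ∀ x, φ x = k • ψ x) (m : ℕ) :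
    Hmap φ m = k • Hmap ψ m := by
  ext x
  obtain ⟨c, hc, rfl⟩ := exists_mkH_eq x
  rw [AddMonoidHom.smul_apply, Hmap_mkH, Hmap_mkH, ← mkH_nsmul]
  congr 1
  funext g
  exact h (c g)

theorem _root_.DistribMulActionHom.exists_eq_nsmul [IsAddTorsionFree N] (φ : M →+[G] N)
    {k : ℕ} (h : ∀ x, ∃ y, φ x = k • y) : ∃ ψ : M →+[G] N, ∀ x, φ x = k • ψ x := by
  rcases eq_or_ne k 0 with rfl | hk
  · exact ⟨0, fun x => by simpa using h x⟩
  choose ψ hψ using h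
  have hcancel : ∀ y y' : N, k • y = k • y' → y = y' :=
    fun y y' => (IsAddTorsionFree.nsmul_right_injective hk ·)
  refine ⟨{ toFun := ψ
            map_zero' := hcancel _ _ (by rw [← hψ, map_zero, smul_zero])
            map_add' := fun x y => hcancel _ _ (by rw [← hψ, smul_add, ← hψ, ← hψ, map_add])
            map_smul' := fun g x => hcancel _ _ (by
              rw [← hψ, MonoidHom.id_apply, smul_comm, ← hψ, map_smul]) }, hψ⟩

end Cochains

section ShortExact

variable {G : Type} [Group G] {A B Q : Type} [AddCommGroup A] [DistribMulAction G A]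
  [AddCommGroup B] [DistribMulAction G B] [AddCommGroup Q] [DistribMulAction G Q]
  {ι : A →+[G] B} {π : B →+[G] Q}

structure IsShortExact (ι : A →+[G] B) (π : B →+[G] Q) : Prop where
  injective : Function.Injective ι
  surjective : Function.Surjective π
  exact : Function.Exact ι π

theorem exact_cochainMap (hιπ : Function.Exact ι π) (m : ℕ) :
    Function.Exact (cochainMap ι m) (cochainMap π m) := by
  intro c
  constructor
  · intro hc
    choose a ha using fun g => (hιπ (c g)).1 (congrFun hc g)
    exact ⟨a, funext ha⟩
  · rintro ⟨a, rfl⟩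
    funext g
    exact hιπ.apply_apply_eq_zero (a g)

theorem mem_Zc_of_cochainMap_mem_Zc (hι : Function.Injective ι) {m : ℕ}
    {a : (Fin m → G) → A} (ha : cochainMap ι m a ∈ Zc G B m) : a ∈ Zc G A m := by
  rw [mem_Zc_iff] at ha ⊢
  exact cochainMap_injective hι (m + 1) (by rw [← d_cochainMap, ha, map_zero])

variable (hS : IsShortExact ι π)
include hS

theorem IsShortExact.exists_lift {m : ℕ} (q : (Fin m → G) → Q) (hq : q ∈ Zc G Q m) :
    ∃ (c : (Fin m → G) → B) (a : (Fin (m + 1) → G) → A),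
      cochainMap π m c = q ∧ cochainMap ι (m + 1) a = d G B m c := by
  obtain ⟨c, rfl⟩ := cochainMap_surjective hS.surjective m q
  obtain ⟨a, ha⟩ := (exact_cochainMap hS.exact (m + 1) (d G B m c)).1 (by
    rw [← d_cochainMap, mem_Zc_iff.1 hq])
  exact ⟨c, a, rfl, ha⟩

theorem IsShortExact.mem_Zc_of_lift {m : ℕ} {c : (Fin m → G) → B}
    {a : (Fin (m + 1) → G) → A} (h : cochainMap ι (m + 1) a = d G B m c) :
    a ∈ Zc G A (m + 1) :=
  mem_Zc_of_cochainMap_mem_Zc hS.injective (h ▸ mem_Zc_iff.2 (d_d m c))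

/-- Two lifts `c`, `c'` differ by a cochain `u` of `A`, and then `a - a' = d u`. -/
theorem IsShortExact.mkH_eq_mkH_of_lift {m : ℕ} {c c' : (Fin m → G) → B}
    {a a' : (Fin (m + 1) → G) → A} (hc : cochainMap π m c = cochainMap π m c')
    (h : cochainMap ι (m + 1) a = d G B m c) (h' : cochainMap ι (m + 1) a' = d G B m c') :
    mkH G A (m + 1) a (hS.mem_Zc_of_lift h) = mkH G A (m + 1) a' (hS.mem_Zc_of_lift h') := by
  obtain ⟨u, hu⟩ := (exact_cochainMap hS.exact m (c - c')).1 (by rw [map_sub, hc, sub_self])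
  rw [mkH_eq_mkH_iff]
  refine ⟨u, cochainMap_injective hS.injective (m + 1) ?_⟩
  rw [← d_cochainMap, hu, map_sub, map_sub, h, h']

/-- The connecting map on cocycles: lift `q` to a cochain `c` of `B`; then `d c` comes from a
cocycle `a` of `A`. -/
noncomputable def IsShortExact.connectingZc (m : ℕ) (q : Zc G Q m) : H G A (m + 1) :=
  mkH G A (m + 1) (hS.exists_lift q.1 q.2).choose_spec.choose
    (hS.mem_Zc_of_lift (hS.exists_lift q.1 q.2).choose_spec.choose_spec.2)

theorem IsShortExact.connectingZc_eq {m : ℕ} (q : Zc G Q m) {c : (Fin m → G) → B}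
    {a : (Fin (m + 1) → G) → A} (hc : cochainMap π m c = q)
    (h : cochainMap ι (m + 1) a = d G B m c) :
    hS.connectingZc m q = mkH G A (m + 1) a (hS.mem_Zc_of_lift h) :=
  have hlift := (hS.exists_lift q.1 q.2).choose_spec.choose_spec
  hS.mkH_eq_mkH_of_lift (hlift.1.trans hc.symm) hlift.2 h

noncomputable def IsShortExact.connecting (m : ℕ) : H G Q m →+ H G A (m + 1) :=
  QuotientAddGroup.lift _
    { toFun := hS.connectingZc m
      map_zero' := by
        rw [hS.connectingZc_eq 0 (c := 0) (a := 0) (map_zero _) (by rw [map_zero, map_zero])]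
        rfl
      map_add' := fun q q' => by
        obtain ⟨c, a, hc, h⟩ := hS.exists_lift q.1 q.2
        obtain ⟨c', a', hc', h'⟩ := hS.exists_lift q'.1 q'.2
        rw [hS.connectingZc_eq q hc h, hS.connectingZc_eq q' hc' h',
          hS.connectingZc_eq (q + q') (c := c + c') (a := a + a')
            (by rw [map_add, hc, hc']; rfl) (by rw [map_add, map_add, h, h'])]
        exact mkH_add _ _ }
    fun q hq => by
      obtain ⟨c, hcB, hc⟩ :=
        exists_mem_Bc_cochainMap_eq hS.surjective (AddSubgroup.mem_addSubgroupOf.1 hq)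
      show hS.connectingZc m q = 0
      rw [hS.connectingZc_eq q (a := 0) hc (by rw [map_zero, mem_Zc_iff.1 (Bc_le_Zc m hcB)])]
      rfl

theorem IsShortExact.connecting_mkH {m : ℕ} {c : (Fin m → G) → B}
    (hq : cochainMap π m c ∈ Zc G Q m) {a : (Fin (m + 1) → G) → A}
    (ha : a ∈ Zc G A (m + 1)) (h : cochainMap ι (m + 1) a = d G B m c) :
    hS.connecting m (mkH G Q m (cochainMap π m c) hq) = mkH G A (m + 1) a ha :=
  hS.connectingZc_eq ⟨_, hq⟩ rfl h

theorem IsShortExact.ker_Hmap_le_range_Hmap (m : ℕ) :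
    (Hmap π m).ker ≤ (Hmap ι m).range := by
  intro x hx
  obtain ⟨z, hz, rfl⟩ := exists_mkH_eq x
  obtain ⟨c, hcB, hc⟩ := exists_mem_Bc_cochainMap_eq hS.surjective
    ((mkH_eq_zero_iff (cochainMap_mem_Zc π hz)).1 (AddMonoidHom.mem_ker.1 hx))
  obtain ⟨a, ha⟩ := (exact_cochainMap hS.exact m (z - c)).1 (by rw [map_sub, hc, sub_self])
  have haZ : a ∈ Zc G A m :=
    mem_Zc_of_cochainMap_mem_Zc hS.injective (ha ▸ sub_mem hz (Bc_le_Zc m hcB))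
  refine ⟨mkH G A m a haZ, ?_⟩
  rw [Hmap_mkH, mkH_eq_mkH_iff, ha, sub_sub_cancel_left]
  exact neg_mem hcB

theorem IsShortExact.exact_Hmap_connecting (m : ℕ) :
    Function.Exact (Hmap π m) (hS.connecting m) := by
  intro y
  constructor
  · intro hy
    obtain ⟨q, hq, rfl⟩ := exists_mkH_eq y
    obtain ⟨c, a, rfl, h⟩ := hS.exists_lift q hq
    rw [hS.connecting_mkH hq (hS.mem_Zc_of_lift h) h, mkH_eq_zero_iff] at hy
    obtain ⟨a', rfl⟩ := hy
    have hz : c - cochainMap ι m a' ∈ Zc G B m := by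
      rw [mem_Zc_iff, map_sub, d_cochainMap, h, sub_self]
    refine ⟨mkH G B m _ hz, ?_⟩
    rw [Hmap_mkH, mkH_eq_mkH_iff, map_sub, (exact_cochainMap hS.exact m).apply_apply_eq_zero,
      sub_zero, sub_self]
    exact zero_mem _
  · rintro ⟨x, rfl⟩
    obtain ⟨z, hz, rfl⟩ := exists_mkH_eq x
    rw [Hmap_mkH, hS.connecting_mkH _ (zero_mem _) (by rw [map_zero, mem_Zc_iff.1 hz])]
    rfl

theorem IsShortExact.ker_Hmap_le_range_connecting (m : ℕ) :
    (Hmap ι (m + 1)).ker ≤ (hS.connecting m).range := by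
  intro x hx
  obtain ⟨a, ha, rfl⟩ := exists_mkH_eq x
  obtain ⟨c, hc⟩ : cochainMap ι (m + 1) a ∈ Bc G B (m + 1) :=
    (mkH_eq_zero_iff _).1 (AddMonoidHom.mem_ker.1 hx)
  have hq : cochainMap π m c ∈ Zc G Q m := by
    rw [mem_Zc_iff, d_cochainMap, hc, (exact_cochainMap hS.exact _).apply_apply_eq_zero]
  exact ⟨mkH G Q m _ hq, hS.connecting_mkH hq ha hc.symm⟩

end ShortExact

end GroupCoh

open GroupCoh

theorem short_exact_sequence_of_submodule_of_smul_general (p : ℕ) [Fact p.Prime]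
    (G : Type) [Group G] (m : ℕ)
    (A : Type) [AddCommGroup A] [Module (PadicInt p) A] [DistribMulAction G A]
    (B : Type) [AddCommGroup B] [Module (PadicInt p) B] [DistribMulAction G B]
    [Module.Free (PadicInt p) B]
    (Q : Type) [AddCommGroup Q] [Module (PadicInt p) Q] [DistribMulAction G Q]
    (ι : A →ₗ[PadicInt p] B) (π : B →ₗ[PadicInt p] Q)
    (hι : ∀ (g : G) (a : A), ι (g • a) = g • ι a)
    (hπ : ∀ (g : G) (b : B), π (g • b) = g • π b)
    (hinj : Function.Injective ι) (hsurj : Function.Surjective π)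
    (hexact : Function.Exact ι π)
    (f : ℕ) (hf : f = AddMonoid.exponent (H G A (m + 1)))
    (hAfB : ∀ a : A, ∃ b : B, ι a = f • b)
    (e : ℕ) (he : e = AddMonoid.exponent (H G B m))
    (hAeB : ∀ a : A, ∃ b : B, ι a = e • b) :
    (∃ (F : H G B m →+ H G Q m) (δ : H G Q m →+ H G A (m + 1)),
      (∀ (c : (Fin m → G) → B) (hc : c ∈ Zc G B m) (hc' : (fun x => π (c x)) ∈ Zc G Q m),
          F (mkH G B m c hc) = mkH G Q m (fun x => π (c x)) hc') ∧
      (∀ (c : (Fin m → G) → B) (a : (Fin (m + 1) → G) → A)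
          (ha : a ∈ Zc G A (m + 1)) (hq : (fun x => π (c x)) ∈ Zc G Q m),
          (∀ x, ι (a x) = d G B m c x) →
          δ (mkH G Q m (fun x => π (c x)) hq) = mkH G A (m + 1) a ha) ∧
      Function.Injective F ∧ Function.Exact F δ ∧ Function.Surjective δ) := by
  have : IsAddTorsionFree B := .of_isTorsionFree (PadicInt p) B
  let ιG : A →+[G] B := { ι.toAddMonoidHom with map_smul' := hι }
  let πG : B →+[G] Q := { π.toAddMonoidHom with map_smul' := hπ }
  have hS : IsShortExact ιG πG := ⟨hinj, hsurj, hexact⟩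
  have hHmapι : Hmap ιG m = 0 := by
    obtain ⟨ψ, hψ⟩ := ιG.exists_eq_nsmul hAeB
    ext x
    rw [Hmap_eq_nsmul hψ, AddMonoidHom.smul_apply, he, AddMonoid.exponent_nsmul_eq_zero]
    rfl
  have hHmapι_succ : Hmap ιG (m + 1) = 0 := by
    obtain ⟨ψ, hψ⟩ := ιG.exists_eq_nsmul hAfB
    ext x
    rw [Hmap_eq_nsmul hψ, AddMonoidHom.smul_apply, ← map_nsmul, hf,
      AddMonoid.exponent_nsmul_eq_zero, map_zero]
    rfl
  refine ⟨Hmap πG m, hS.connecting m, fun c hc _ => Hmap_mkH πG hc,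
    fun c a ha hq h => hS.connecting_mkH hq ha (funext h), ?_, hS.exact_Hmap_connecting m, ?_⟩
  · refine (injective_iff_map_eq_zero _).2 fun x hx => ?_
    obtain ⟨y, rfl⟩ := hS.ker_Hmap_le_range_Hmap m hx
    rw [hHmapι]
    rfl
  · intro x
    exact hS.ker_Hmap_le_range_connecting m (by rw [AddMonoidHom.mem_ker, hHmapι_succ]; rfl)

/-- Let `G` be a finite group, `B` a `G`-module free of finite rank over `ℤ_p`, and `A` a
`ℤ_p G`-submodule of `B` contained both in `f·B` and in `e·B`, where `e = exp H^m(G,B)` and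
`f = exp H^{m+1}(G,A)`. Then there is a short exact sequence
`0 → H^m(G,B) → H^m(G,B/A) → H^{m+1}(G,A) → 0`; in particular the map
`H^m(G,B) → H^m(G,B/A)` is injective and the connecting homomorphism
`H^m(G,B/A) → H^{m+1}(G,A)` is surjective. -/
theorem short_exact_sequence_of_submodule_of_smul (p : ℕ) [Fact p.Prime]
    (G : Type) [Group G] [Fintype G] (m : ℕ)
    (A : Type) [AddCommGroup A] [Module (PadicInt p) A] [DistribMulAction G A]
    [SMulCommClass G (PadicInt p) A]
    (B : Type) [AddCommGroup B] [Module (PadicInt p) B] [DistribMulAction G B]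
    [SMulCommClass G (PadicInt p) B]
    [Module.Free (PadicInt p) B] [Module.Finite (PadicInt p) B]
    (Q : Type) [AddCommGroup Q] [Module (PadicInt p) Q] [DistribMulAction G Q]
    [SMulCommClass G (PadicInt p) Q]
    (ι : A →ₗ[PadicInt p] B) (π : B →ₗ[PadicInt p] Q)
    (hι : ∀ (g : G) (a : A), ι (g • a) = g • ι a)
    (hπ : ∀ (g : G) (b : B), π (g • b) = g • π b)
    (hinj : Function.Injective ι) (hsurj : Function.Surjective π)
    (hexact : Function.Exact ι π)
    (f : ℕ) (hf : f = AddMonoid.exponent (H G A (m + 1)))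
    (hAfB : ∀ a : A, ∃ b : B, ι a = f • b)
    (e : ℕ) (he : e = AddMonoid.exponent (H G B m))
    (hAeB : ∀ a : A, ∃ b : B, ι a = e • b) :
    (∃ (F : H G B m →+ H G Q m) (δ : H G Q m →+ H G A (m + 1)),
      (∀ (c : (Fin m → G) → B) (hc : c ∈ Zc G B m) (hc' : (fun x => π (c x)) ∈ Zc G Q m),
          F (mkH G B m c hc) = mkH G Q m (fun x => π (c x)) hc') ∧
      (∀ (c : (Fin m → G) → B) (a : (Fin (m + 1) → G) → A)
          (ha : a ∈ Zc G A (m + 1)) (hq : (fun x => π (c x)) ∈ Zc G Q m),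
          (∀ x, ι (a x) = d G B m c x) →
          δ (mkH G Q m (fun x => π (c x)) hq) = mkH G A (m + 1) a ha) ∧
      Function.Injective F ∧ Function.Exact F δ ∧ Function.Surjective δ) :=
  short_exact_sequence_of_submodule_of_smul_general p G m A B Q ι π hι hπ hinj hsurj hexact f hf
    hAfB e he hAeB
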